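/- The sinc kernel decomposes over its orthonormal eigenfunctions {sinc(· − n) : n ∈ ℤ}: for all x, x' ∈ ℝ, the family n ↦ sinc(x − n)·sinc(x' − n) indexed by n ∈ ℤ is summable and ∑_{n∈ℤ} sinc(x − n)·sinc(x' − n) = sinc(x − x'). -/

import Mathlib

/-!
On `(-1/2, 1/2]` the plane wave `t ↦ exp (2π i y t)` has `n`-th Fourier coefficient
`sinc (y - n)`, and the `L²` inner product of the plane waves of frequencies `x` and `x'` is
`sinc (x' - x)`. Parseval's identity, in its polarised form, turns this into the claimed
expansion. Centring the interval at `0` is what makes the Fourier coefficients real. -/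

open Complex MeasureTheory
open scoped Real ComplexConjugate

/-- The sinc function: `sinc 0 = 1`, `sinc t = sin (π t) / (π t)` otherwise. -/
noncomputable def sinc (t : ℝ) : ℝ :=
  if t = 0 then 1 else Real.sin (Real.pi * t) / (Real.pi * t)

lemma sinc_eq_real_sinc (t : ℝ) : sinc t = Real.sinc (π * t) := by
  simp [sinc, Real.sinc, Real.pi_ne_zero]

lemma sinc_neg (t : ℝ) : sinc (-t) = sinc t := by
  rw [sinc_eq_real_sinc, sinc_eq_real_sinc, mul_neg, Real.sinc_neg]

theorem hasSum_conj_fourierCoeff_mul {T : ℝ} [hT : Fact (0 < T)]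
    (f g : Lp ℂ 2 (@AddCircle.haarAddCircle T hT)) :
    HasSum (fun i => conj (fourierCoeff f i) * fourierCoeff g i)
      (∫ t : AddCircle T, conj (f t) * g t ∂AddCircle.haarAddCircle) := by
  have hterm (i : ℤ) : inner ℂ f (fourierBasis i) * inner ℂ (fourierBasis i) g =
      conj (fourierCoeff f i) * fourierCoeff g i := by
    rw [← inner_conj_symm, ← fourierBasis.repr_apply_apply, ← fourierBasis.repr_apply_apply,
      fourierBasis_repr, fourierBasis_repr]
  have h := fourierBasis.hasSum_inner_mul_inner f g
  simp only [hterm] at h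
  simpa only [L2.inner_def, RCLike.inner_apply'] using h

theorem hasSum_conj_fourierCoeffOn_mul {a b : ℝ} {f g : ℝ → ℂ} (hab : a < b)
    (hf : MemLp f 2 (volume.restrict (Set.Ioc a b)))
    (hg : MemLp g 2 (volume.restrict (Set.Ioc a b))) :
    HasSum (fun i => conj (fourierCoeffOn hab f i) * fourierCoeffOn hab g i)
      ((b - a)⁻¹ • ∫ x in a..b, conj (f x) * g x) := by
  have := Fact.mk (sub_pos.mpr hab)
  rw [← add_sub_cancel a b] at hf hg
  have hf' := hf.memLp_liftIoc.haarAddCircle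
  have hg' := hg.memLp_liftIoc.haarAddCircle
  convert hasSum_conj_fourierCoeff_mul hf'.toLp hg'.toLp using 1
  · simp [fourierCoeff_congr_ae hf'.coeFn_toLp, fourierCoeff_congr_ae hg'.coeFn_toLp,
      fourierCoeff_liftIoc_eq]
  · nth_rw 2 [← add_sub_cancel a b]
    rw [← AddCircle.integral_liftIoc_eq_intervalIntegral, ← AddCircle.integral_haarAddCircle]
    refine integral_congr_ae ?_
    filter_upwards [hf'.coeFn_toLp, hg'.coeFn_toLp] with t hft hgt
    rw [hft, hgt]
    rfl

lemma memLp_cexp_two_pi_mul_I (y : ℝ) (μ : Measure ℝ) [IsFiniteMeasure μ] :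
    MemLp (fun t : ℝ => cexp (2 * π * y * t * I)) 2 μ :=
  MemLp.of_bound (by fun_prop) 1 (ae_of_all _ fun t => by
    rw [show (2 * π * y * t : ℂ) = ((2 * π * y * t : ℝ) : ℂ) by push_cast; ring,
      norm_exp_ofReal_mul_I])

lemma integral_cexp_two_pi_mul_I (y : ℝ) :
    ∫ t in (-1/2 : ℝ)..1/2, cexp (2 * π * y * t * I) = sinc y := by
  rcases eq_or_ne y 0 with rfl | hy
  · norm_num [sinc]
  have hc : 2 * π * y ≠ 0 := by positivity
  have h := intervalIntegral.integral_comp_mul_left (fun s : ℝ => cexp (s * I)) hc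
    (a := -1/2) (b := 1/2)
  simp only [ofReal_mul, ofReal_ofNat] at h
  rw [h, show 2 * π * y * (-1/2) = -(π * y) by ring, show 2 * π * y * (1/2) = π * y by ring,
    integral_exp_mul_I_eq_sin, sinc_eq_real_sinc, Real.sinc_of_ne_zero (by positivity),
    Complex.real_smul]
  push_cast
  field_simp

lemma fourierCoeffOn_cexp_two_pi_mul_I (y : ℝ) (n : ℤ) :
    fourierCoeffOn (by norm_num : (-1/2 : ℝ) < 1/2) (fun t : ℝ => cexp (2 * π * y * t * I)) n =
      sinc (y - n) := by
  have hlen : (1/2 - -1/2 : ℝ) = 1 := by norm_num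
  rw [fourierCoeffOn_eq_integral, ← integral_cexp_two_pi_mul_I]
  simp only [fourier_coe_apply, hlen, ofReal_one, div_one, one_smul, smul_eq_mul,
    ← Complex.exp_add]
  refine intervalIntegral.integral_congr fun t _ => ?_
  push_cast
  congr 1
  ring

lemma integral_conj_cexp_mul_cexp (x x' : ℝ) :
    ∫ t in (-1/2 : ℝ)..1/2, conj (cexp (2 * π * x * t * I)) * cexp (2 * π * x' * t * I) =
      sinc (x' - x) := by
  rw [← integral_cexp_two_pi_mul_I]
  refine intervalIntegral.integral_congr fun t _ => ?_
  simp only [← Complex.exp_conj, ← Complex.exp_add, map_mul, conj_ofReal, conj_I, map_ofNat]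
  push_cast
  congr 1
  ring

/-- **P2.** The sinc kernel decomposes over its orthonormal eigenfunctions
`{sinc (· − n) : n ∈ ℤ}`. -/
theorem sinc_kernel_eigenfunction_decomposition (x x' : ℝ) :
    Summable (fun n : ℤ => sinc (x - n) * sinc (x' - n)) ∧
      (∑' n : ℤ, sinc (x - n) * sinc (x' - n)) = sinc (x - x') := by
  have h := hasSum_conj_fourierCoeffOn_mul (by norm_num : (-1/2 : ℝ) < 1/2)
    (memLp_cexp_two_pi_mul_I x _) (memLp_cexp_two_pi_mul_I x' _)
  rw [integral_conj_cexp_mul_cexp, ← sinc_neg, neg_sub] at h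
  simp only [fourierCoeffOn_cexp_two_pi_mul_I, conj_ofReal, ← ofReal_mul] at h
  rw [show (1/2 - -1/2 : ℝ)⁻¹ = 1 by norm_num, one_smul] at h
  have hR := hasSum_ofReal.mp h
  exact ⟨hR.summable, hR.tsum_eq⟩
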